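/- Let ρ and σ be density matrices on a finite-dimensional Hilbert space and let Λ be an operator with 0 ≤ Λ ≤ I. Then |√(Tr(Λρ)) − √(Tr(Λσ))| ≤ P(ρ,σ), where P(ρ,σ) = √(1 − F(ρ,σ)²) is the purified distance and F(ρ,σ) = ‖√ρ √σ‖₁ is the fidelity. -/

import Mathlib

open Matrix BigOperators Classical ComplexOrder

noncomputable section

variable {n : Type*} [Fintype n] [DecidableEq n]

/-- positive-semidefinite square root, extended by 0. -/
noncomputable def msqrt (A : Matrix n n ℂ) : Matrix n n ℂ :=
  if h : A.PosSemidef then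
    (h.1.eigenvectorUnitary : Matrix n n ℂ) *
      Matrix.diagonal ((↑) ∘ (fun x : ℝ => Real.sqrt x) ∘ h.1.eigenvalues) *
      (star (h.1.eigenvectorUnitary : Matrix n n ℂ))
  else 0

/-- trace norm ‖X‖₁ = Tr √(XᴴX). -/
noncomputable def traceNorm (X : Matrix n n ℂ) : ℝ :=
  (msqrt (Xᴴ * X)).trace.re

/-- fidelity F(ρ,σ) = ‖√ρ√σ‖₁. -/
noncomputable def fidelity (ρ σ : Matrix n n ℂ) : ℝ :=
  traceNorm (msqrt ρ * msqrt σ)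

/-- purified distance. -/
noncomputable def purifiedDist (ρ σ : Matrix n n ℂ) : ℝ :=
  Real.sqrt (1 - (fidelity ρ σ)^2)

def IsDensityMatrix (ρ : Matrix n n ℂ) : Prop := ρ.PosSemidef ∧ ρ.trace = 1

/-- max-relative entropy. -/
noncomputable def Dmax (ρ σ : Matrix n n ℂ) : ℝ :=
  sInf {l : ℝ | ((((2:ℝ)^l : ℝ) : ℂ) • σ - ρ).PosSemidef}

/-- smooth hypothesis testing divergence. -/
noncomputable def DH (ε : ℝ) (ρ τ : Matrix n n ℂ) : ℝ :=
  sSup {r : ℝ | ∃ P : Matrix n n ℂ, P.PosSemidef ∧ ((1 : Matrix n n ℂ) - P).PosSemidef ∧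
    1 - ε ≤ ((P * ρ).trace).re ∧ r = - Real.logb 2 ((P * τ).trace).re}

/-- functional calculus for hermitian matrices (0 otherwise). -/
noncomputable def hermCFC (f : ℝ → ℝ) (A : Matrix n n ℂ) : Matrix n n ℂ :=
  if h : A.IsHermitian then
    (Matrix.IsHermitian.eigenvectorUnitary h : Matrix n n ℂ) *
      Matrix.diagonal (fun i => (f (h.eigenvalues i) : ℂ)) *
      (star (Matrix.IsHermitian.eigenvectorUnitary h : Matrix n n ℂ))
  else 0

/-- von Neumann entropy (base 2). -/
noncomputable def vnEntropy (ρ : Matrix n n ℂ) : ℝ :=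
  if h : ρ.IsHermitian then -∑ i, (h.eigenvalues i) * Real.logb 2 (h.eigenvalues i) else 0

end

/-!
Measuring with the two-outcome POVM `{Λ, 1 - Λ}` cannot decrease the fidelity:
`F(ρ, σ) ≤ √(pq) + √((1-p)(1-q))` with `p = Tr Λρ`, `q = Tr Λσ`. To see this, write
`√ρ√σ = ∑ₖ (√Λₖ√ρ)ᴴ (√Λₖ√σ)` and `‖√ρ√σ‖₁ = Re Tr (√ρ√σ T)` with `T` the adjoint of the polar factor
of `√ρ√σ`, a contraction; Cauchy–Schwarz for the Hilbert–Schmidt inner product then bounds the `k`-th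
term by `‖√Λₖ√ρ‖₂ ‖√Λₖ√σ‖₂ = √(Tr Λₖρ) √(Tr Λₖσ)`. For two-point distributions
`(√p - √q)² = 1 - G² - 2√(pq)(1 - G)` with `G = √(pq) + √((1-p)(1-q)) ≤ 1`, which gives the claim.
-/

section

variable {n : Type*} [Fintype n]

theorem re_trace_conjTranspose_mul_le (A B : Matrix n n ℂ) :
    (Aᴴ * B).trace.re ≤ √(Aᴴ * A).trace.re * √(Bᴴ * B).trace.re := by
  let _ := toMatrixSeminormedAddCommGroup (1 : Matrix n n ℂ) PosSemidef.one
  let _ := toMatrixInnerProductSpace (1 : Matrix n n ℂ) PosSemidef.one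
  have hnorm (C : Matrix n n ℂ) : ‖C‖ = √(Cᴴ * C).trace.re := by
    have h : ‖C‖ = √(C * 1 * Cᴴ).trace.re := rfl
    rw [h, Matrix.mul_one, trace_mul_comm]
  have hinner : inner ℂ A B = (Aᴴ * B).trace := by
    have h : inner ℂ A B = (B * 1 * Aᴴ).trace := rfl
    rw [h, Matrix.mul_one, trace_mul_comm]
  simpa only [hnorm, hinner, RCLike.re_to_complex] using re_inner_le_norm (𝕜 := ℂ) A B

variable [DecidableEq n]

theorem re_trace_conjTranspose_mul_mul_le {T : Matrix n n ℂ} (hT : (1 - T * Tᴴ).PosSemidef)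
    (Y Z : Matrix n n ℂ) :
    (Yᴴ * Z * T).trace.re ≤ √(Yᴴ * Y).trace.re * √(Zᴴ * Z).trace.re := by
  have hZT : ((Z * T)ᴴ * (Z * T)).trace.re ≤ (Zᴴ * Z).trace.re := by
    have h := (RCLike.nonneg_iff.mp (hT.mul_mul_conjTranspose_same Z).trace_nonneg).1
    rw [Matrix.mul_sub, Matrix.sub_mul, trace_sub, RCLike.re_to_complex, Complex.sub_re,
      Matrix.mul_one, trace_mul_comm Z, ← Matrix.mul_assoc, trace_mul_comm (Z * T * Tᴴ)] at h
    rw [conjTranspose_mul, Matrix.mul_assoc, trace_mul_comm]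
    simp only [Matrix.mul_assoc] at h ⊢
    linarith
  calc (Yᴴ * Z * T).trace.re = (Yᴴ * (Z * T)).trace.re := by rw [Matrix.mul_assoc]
    _ ≤ √(Yᴴ * Y).trace.re * √((Z * T)ᴴ * (Z * T)).trace.re := re_trace_conjTranspose_mul_le _ _
    _ ≤ √(Yᴴ * Y).trace.re * √(Zᴴ * Z).trace.re := by gcongr

theorem msqrt_of_posSemidef {A : Matrix n n ℂ} (hA : A.PosSemidef) :
    msqrt A = (hA.1.eigenvectorUnitary : Matrix n n ℂ) *
      diagonal (fun i => ((√(hA.1.eigenvalues i) : ℝ) : ℂ)) *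
      star (hA.1.eigenvectorUnitary : Matrix n n ℂ) :=
  dif_pos hA

theorem posSemidef_msqrt {A : Matrix n n ℂ} (hA : A.PosSemidef) : (msqrt A).PosSemidef := by
  rw [msqrt_of_posSemidef hA, star_eq_conjTranspose]
  refine PosSemidef.mul_mul_conjTranspose_same ?_ _
  exact posSemidef_diagonal_iff.mpr fun i => by simp [Real.sqrt_nonneg]

theorem msqrt_mul_msqrt {A : Matrix n n ℂ} (hA : A.PosSemidef) : msqrt A * msqrt A = A := by
  have hsq : diagonal (fun i => ((√(hA.1.eigenvalues i) : ℝ) : ℂ)) *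
      diagonal (fun i => ((√(hA.1.eigenvalues i) : ℝ) : ℂ)) =
      diagonal (RCLike.ofReal ∘ hA.1.eigenvalues) := by
    rw [diagonal_mul_diagonal]
    congr 1 with i
    rw [← Complex.ofReal_mul, Real.mul_self_sqrt (hA.eigenvalues_nonneg i)]
    rfl
  conv_rhs => rw [hA.1.spectral_theorem, Unitary.conjStarAlgAut_apply, ← hsq]
  rw [msqrt_of_posSemidef hA]
  simp only [Matrix.mul_assoc]
  rw [← Matrix.mul_assoc (star _) _, Unitary.coe_star_mul_self, Matrix.one_mul]

theorem trace_msqrt {A : Matrix n n ℂ} (hA : A.PosSemidef) :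
    (msqrt A).trace = ∑ i, ((√(hA.1.eigenvalues i) : ℝ) : ℂ) := by
  rw [msqrt_of_posSemidef hA, trace_mul_cycle, Unitary.coe_star_mul_self, Matrix.one_mul,
    trace_diagonal]

theorem traceNorm_nonneg (X : Matrix n n ℂ) : 0 ≤ traceNorm X :=
  (RCLike.nonneg_iff.mp (posSemidef_msqrt (posSemidef_conjTranspose_mul_self X)).trace_nonneg).1

theorem exists_contraction_traceNorm_eq (X : Matrix n n ℂ) :
    ∃ T : Matrix n n ℂ, (1 - T * Tᴴ).PosSemidef ∧ traceNorm X = (X * T).trace.re := by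
  have hM := posSemidef_conjTranspose_mul_self X
  set U : Matrix n n ℂ := (hM.1.eigenvectorUnitary : Matrix n n ℂ)
  set μ := hM.1.eigenvalues
  have hU : U * star U = 1 := Unitary.coe_mul_star_self _
  have hdiag : star U * (Xᴴ * X) * U = diagonal (fun i => (μ i : ℂ)) := by
    have h := hM.1.conjStarAlgAut_star_eigenvectorUnitary
    rw [Unitary.conjStarAlgAut_star_apply] at h
    exact h
  -- as `(√0)⁻¹ = 0`, `U D Uᴴ` is the pseudo-inverse of `|X| = U √μ Uᴴ`, and the witness
  -- `T = U D Uᴴ Xᴴ` is the adjoint of the polar factor of `X`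
  let D : Matrix n n ℂ := diagonal (fun i => (((√(μ i))⁻¹ : ℝ) : ℂ))
  have hD : Dᴴ = D := by simp [D, diagonal_conjTranspose]
  have hDμ : D * diagonal (fun i => (μ i : ℂ)) = diagonal (fun i => ((√(μ i) : ℝ) : ℂ)) := by
    rw [diagonal_mul_diagonal]
    congr 1 with i
    rw [← Complex.ofReal_mul, inv_mul_eq_div, Real.div_sqrt]
  refine ⟨U * D * star U * Xᴴ, ?_, ?_⟩
  · have hTT : U * D * star U * Xᴴ * (U * D * star U * Xᴴ)ᴴ =
        U * diagonal (fun i => ((√(μ i) * (√(μ i))⁻¹ : ℝ) : ℂ)) * star U := by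
      calc _ = U * D * (star U * (Xᴴ * X) * U) * D * star U := by
            simp only [conjTranspose_mul, conjTranspose_conjTranspose, hD, star_eq_conjTranspose,
              Matrix.mul_assoc]
        _ = _ := by
          rw [hdiag, Matrix.mul_assoc U D, hDμ, Matrix.mul_assoc U, diagonal_mul_diagonal]
          push_cast
          rfl
    have hsub : 1 - U * D * star U * Xᴴ * (U * D * star U * Xᴴ)ᴴ =
        U * diagonal (fun i => ((1 - √(μ i) * (√(μ i))⁻¹ : ℝ) : ℂ)) * Uᴴ := by
      rw [hTT, ← star_eq_conjTranspose]
      push_cast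
      rw [← diagonal_sub, Matrix.mul_sub, Matrix.sub_mul, diagonal_one, Matrix.mul_one, hU]
    rw [hsub]
    refine PosSemidef.mul_mul_conjTranspose_same (posSemidef_diagonal_iff.mpr fun i => ?_) _
    exact_mod_cast sub_nonneg.mpr mul_inv_le_one
  · have htr : (X * (U * D * star U * Xᴴ)).trace = (D * (star U * (Xᴴ * X) * U)).trace := by
      rw [trace_mul_comm]
      simp only [Matrix.mul_assoc]
      rw [trace_mul_comm U]
      simp only [Matrix.mul_assoc]
    rw [htr, hdiag, hDμ, trace_diagonal, traceNorm, trace_msqrt hM, Complex.re_sum]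

theorem traceNorm_sum_conjTranspose_mul_le {ι : Type*} (s : Finset ι) (Y Z : ι → Matrix n n ℂ) :
    traceNorm (∑ k ∈ s, (Y k)ᴴ * Z k) ≤
      ∑ k ∈ s, √((Y k)ᴴ * Y k).trace.re * √((Z k)ᴴ * Z k).trace.re := by
  obtain ⟨T, hT, hX⟩ := exists_contraction_traceNorm_eq (∑ k ∈ s, (Y k)ᴴ * Z k)
  rw [hX, Finset.sum_mul, trace_sum, Complex.re_sum]
  exact Finset.sum_le_sum fun k _ => re_trace_conjTranspose_mul_mul_le hT (Y k) (Z k)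

theorem trace_conjTranspose_mul_self_msqrt_mul_msqrt {Λ ρ : Matrix n n ℂ} (hΛ : Λ.PosSemidef)
    (hρ : ρ.PosSemidef) :
    ((msqrt Λ * msqrt ρ)ᴴ * (msqrt Λ * msqrt ρ)).trace = (Λ * ρ).trace := by
  rw [conjTranspose_mul, (posSemidef_msqrt hΛ).1.eq, (posSemidef_msqrt hρ).1.eq,
    Matrix.mul_assoc, ← Matrix.mul_assoc (msqrt Λ), msqrt_mul_msqrt hΛ, trace_mul_comm,
    Matrix.mul_assoc, msqrt_mul_msqrt hρ]

theorem re_trace_mul_nonneg {Λ ρ : Matrix n n ℂ} (hΛ : Λ.PosSemidef) (hρ : ρ.PosSemidef) :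
    0 ≤ (Λ * ρ).trace.re := by
  rw [← trace_conjTranspose_mul_self_msqrt_mul_msqrt hΛ hρ]
  exact (RCLike.nonneg_iff.mp (posSemidef_conjTranspose_mul_self (msqrt Λ * msqrt ρ)).trace_nonneg).1

theorem fidelity_le_sum_sqrt_mul_sqrt {ι : Type*} [Fintype ι] {ρ σ : Matrix n n ℂ}
    (hρ : ρ.PosSemidef) (hσ : σ.PosSemidef) (Λ : ι → Matrix n n ℂ)
    (hΛ : ∀ k, (Λ k).PosSemidef) (hΛ1 : ∑ k, Λ k = 1) :
    fidelity ρ σ ≤ ∑ k, √(Λ k * ρ).trace.re * √(Λ k * σ).trace.re := by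
  have hsplit : msqrt ρ * msqrt σ =
      ∑ k, (msqrt (Λ k) * msqrt ρ)ᴴ * (msqrt (Λ k) * msqrt σ) := by
    have hterm (k : ι) : (msqrt (Λ k) * msqrt ρ)ᴴ * (msqrt (Λ k) * msqrt σ) =
        msqrt ρ * Λ k * msqrt σ := by
      rw [conjTranspose_mul, (posSemidef_msqrt (hΛ k)).1.eq, (posSemidef_msqrt hρ).1.eq]
      conv_rhs => rw [← msqrt_mul_msqrt (hΛ k)]
      simp only [Matrix.mul_assoc]
    simp only [hterm, ← Finset.sum_mul, ← Finset.mul_sum, hΛ1, Matrix.mul_one]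
  rw [fidelity, hsplit]
  refine (traceNorm_sum_conjTranspose_mul_le _ _ _).trans_eq ?_
  simp only [trace_conjTranspose_mul_self_msqrt_mul_msqrt (hΛ _) hρ,
    trace_conjTranspose_mul_self_msqrt_mul_msqrt (hΛ _) hσ]

end

theorem abs_sqrt_sub_sqrt_le_sqrt_one_sub_sq {p q F : ℝ} (hp₀ : 0 ≤ p) (hp₁ : p ≤ 1)
    (hq₀ : 0 ≤ q) (hq₁ : q ≤ 1) (hF₀ : 0 ≤ F) (hF : F ≤ √p * √q + √(1 - p) * √(1 - q)) :
    |√p - √q| ≤ √(1 - F ^ 2) := by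
  have hp := Real.sq_sqrt hp₀
  have hq := Real.sq_sqrt hq₀
  have hp' := Real.sq_sqrt (sub_nonneg.mpr hp₁)
  have hq' := Real.sq_sqrt (sub_nonneg.mpr hq₁)
  set G := √p * √q + √(1 - p) * √(1 - q)
  have hunit : (√p ^ 2 + √(1 - p) ^ 2) * (√q ^ 2 + √(1 - q) ^ 2) = 1 := by
    rw [hp, hq, hp', hq']; ring
  -- Lagrange's identity
  have hG : 1 - G ^ 2 = (√p * √(1 - q) - √q * √(1 - p)) ^ 2 := by
    linear_combination -hunit
  have hG₁ : G ≤ 1 := by nlinarith [sq_nonneg (√p * √(1 - q) - √q * √(1 - p))]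
  have hFG : F ^ 2 ≤ G ^ 2 := pow_le_pow_left₀ hF₀ hF 2
  apply Real.abs_le_sqrt
  -- `(√p - √q)² = 1 - G² - 2√p√q(1 - G)`
  nlinarith [mul_nonneg (mul_nonneg (Real.sqrt_nonneg p) (Real.sqrt_nonneg q)) (sub_nonneg.mpr hG₁)]

open Matrix ComplexOrder in
/-- `|√(Tr(Λρ)) − √(Tr(Λσ))| ≤ P(ρ,σ)` for density matrices `ρ, σ` and `0 ≤ Λ ≤ I`. -/
theorem sqrt_trace_diff_le_purifiedDist {n : Type*} [Fintype n] [DecidableEq n]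
    (ρ σ Λ : Matrix n n ℂ) (hρ : IsDensityMatrix ρ) (hσ : IsDensityMatrix σ)
    (hΛ : Λ.PosSemidef) (hΛ1 : ((1 : Matrix n n ℂ) - Λ).PosSemidef) :
    |Real.sqrt ((Λ * ρ).trace.re) - Real.sqrt ((Λ * σ).trace.re)| ≤ purifiedDist ρ σ := by
  obtain ⟨hρ, hρ1⟩ := hρ
  obtain ⟨hσ, hσ1⟩ := hσ
  have hcompl {τ : Matrix n n ℂ} (hτ : τ.trace = 1) :
      ((1 - Λ) * τ).trace.re = 1 - (Λ * τ).trace.re := by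
    rw [Matrix.sub_mul, Matrix.one_mul, trace_sub, hτ, Complex.sub_re, Complex.one_re]
  have hF := fidelity_le_sum_sqrt_mul_sqrt hρ hσ ![Λ, 1 - Λ]
    (Fin.forall_fin_two.mpr ⟨hΛ, hΛ1⟩) (by simp)
  rw [Fin.sum_univ_two, Matrix.cons_val_zero, Matrix.cons_val_one, Matrix.cons_val_zero,
    hcompl hρ1, hcompl hσ1] at hF
  have hp₁ := hcompl hρ1 ▸ re_trace_mul_nonneg hΛ1 hρ
  have hq₁ := hcompl hσ1 ▸ re_trace_mul_nonneg hΛ1 hσ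
  exact abs_sqrt_sub_sqrt_le_sqrt_one_sub_sq (re_trace_mul_nonneg hΛ hρ) (by linarith)
    (re_trace_mul_nonneg hΛ hσ) (by linarith) (traceNorm_nonneg _) hF
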